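/- arXiv:1704.06037 — 2 statements merged into one kernel-verified Lean document; each statement's English description precedes it below -/
import Mathlib

section
/- Let π be a profile with an odd number of voters and suppose Flexible Condition 1 holds for π with respect to preferences ≻₀ and ≻₁. Then ≻₀ = ≻₁ (the preference around which there is Flexible Consensus is unique for odd n). -/
open Classical

/-- Inversion distance between two preference relations: the number of (ordered
representatives of) unordered pairs ranked oppositely. For strict total orders,
each oppositely-ranked unordered pair {x,y} is counted exactly once. -/
noncomputable def invDist {A : Type*} [Fintype A] (r r' : A → A → Prop) : ℕ :=
  {p : A × A | r p.1 p.2 ∧ r' p.2 p.1}.ncard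

/-- Frequency of a preference in a profile (list of preferences). -/
noncomputable def freq {A : Type*} (π : List (A → A → Prop)) (r : A → A → Prop) : ℕ :=
  {i : Fin π.length | π.get i = r}.ncard

/-- Number of voters in the profile ranking `a` above `b`. -/
noncomputable def votesFor {A : Type*} (π : List (A → A → Prop)) (a b : A) : ℕ :=
  {i : Fin π.length | π.get i a b}.ncard

/-- The preference obtained by swapping alternatives `a` and `b` in the ranking. -/
def swapPref {A : Type*} [DecidableEq A] (a b : A) (r : A → A → Prop) : A → A → Prop :=
  fun x y => r (Equiv.swap a b x) (Equiv.swap a b y)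

/-!
If `r0 ≠ r1`, they rank some pair oppositely: `r0` puts `a` above `b` and `r1` puts `b` above `a`.
As the number of voters is odd, one of the two rankings of `{a, b}` has a strict majority, say
`a` over `b`. Matching every preference `q` with `q a b` to its `a`–`b` swap, which ranks `b`
over `a`, some such `q` must be strictly more frequent than its swap. But swapping `a` and `b`
in `q` strictly lowers the inversion distance to `r1`, against Flexible Condition 1 for `r1`.
-/

open Finset

lemma exists_rel_and_rel_swap_of_ne {A : Type*} {r s : A → A → Prop} [IsStrictTotalOrder A r]
    [IsStrictTotalOrder A s] (h : r ≠ s) : ∃ a b, r a b ∧ s b a := by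
  by_contra! hc
  refine h (funext₂ fun x y => propext ⟨fun hxy => ?_, fun hxy => ?_⟩)
  · rcases trichotomous_of s x y with h | rfl | h
    exacts [h, (irrefl_of r x hxy).elim, (hc x y hxy h).elim]
  · rcases trichotomous_of r x y with h | rfl | h
    exacts [h, (irrefl_of s x hxy).elim, (hc y x h hxy).elim]

section SwapPref

variable {A : Type*} [DecidableEq A] {r s : A → A → Prop} {a b : A}

lemma swapPref_swapPref (a b : A) (r : A → A → Prop) : swapPref a b (swapPref a b r) = r := by
  funext x y; simp [swapPref]

lemma swapPref_injective (a b : A) : Function.Injective (swapPref (A := A) a b) :=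
  Function.LeftInverse.injective (swapPref_swapPref a b)

instance isStrictTotalOrder_swapPref [IsStrictTotalOrder A r] :
    IsStrictTotalOrder A (swapPref a b r) where
  trichotomous _ _ hxy hyx :=
    (Equiv.swap a b).injective (Std.Trichotomous.trichotomous _ _ hxy hyx)
  irrefl _ := irrefl (r := r) _
  trans _ _ _ := trans_of r

lemma rel_swap_swap_of_not_rel [IsStrictOrder A r] [IsTrans A s] (hab : r a b) (hba : s b a)
    {x y : A} (hσr : r (Equiv.swap a b x) (Equiv.swap a b y)) (hr : ¬ r x y) (hs : s y x) :
    s (Equiv.swap a b y) (Equiv.swap a b x) := by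
  -- Only `x = b` or `y = a` survive the case split; there `s` passes through `b ≻ a`.
  have r_trans : ∀ {u v w}, r u v → r v w → r u w := trans_of r
  have s_trans : ∀ {u v w}, s u v → s v w → s u w := trans_of s
  have r_irrefl : ∀ u, ¬ r u u := irrefl_of r
  rw [Equiv.swap_apply_def, Equiv.swap_apply_def] at hσr ⊢
  split_ifs at hσr ⊢ <;> subst_vars <;> grind

lemma invDist_swapPref_lt [Fintype A] [IsStrictOrder A r] [IsStrictOrder A s]
    (hab : r a b) (hba : s b a) : invDist (swapPref a b r) s < invDist r s := by
  set σ := Equiv.swap a b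
  -- Inversions of the swapped order inject into those of `r` other than `(a, b)`.
  set f : A × A → A × A := fun p => if r p.1 p.2 then p else (σ p.1, σ p.2)
  have hmaps : ∀ p ∈ {p : A × A | swapPref a b r p.1 p.2 ∧ s p.2 p.1},
      f p ∈ {p : A × A | r p.1 p.2 ∧ s p.2 p.1} \ {(a, b)} := by
    rintro ⟨x, y⟩ ⟨hσr, hs⟩
    by_cases hr : r x y
    · simp only [f, if_pos hr]
      refine ⟨⟨hr, hs⟩, ?_⟩
      rintro ⟨⟩
      exact asymm_of r hab (by simpa [swapPref, σ] using hσr)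
    · simp only [f, if_neg hr]
      refine ⟨⟨hσr, rel_swap_swap_of_not_rel hab hba hσr hr hs⟩, ?_⟩
      intro h
      simp only [Set.mem_singleton_iff, Prod.mk.injEq, σ, Equiv.swap_apply_eq_iff,
        Equiv.swap_apply_left, Equiv.swap_apply_right] at h
      obtain ⟨rfl, rfl⟩ := h
      exact asymm_of s hba hs
  have hinj : Set.InjOn f {p : A × A | swapPref a b r p.1 p.2 ∧ s p.2 p.1} := by
    rintro ⟨x, y⟩ ⟨hσr, -⟩ ⟨x', y'⟩ ⟨hσr', -⟩ hf
    by_cases hr : r x y <;> by_cases hr' : r x' y' <;>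
      simp only [f, hr, hr', if_true, if_false] at hf
    · exact hf
    · obtain ⟨rfl, rfl⟩ := Prod.mk.inj hf
      exact absurd (by simpa [swapPref, σ] using hσr) hr'
    · obtain ⟨rfl, rfl⟩ := Prod.mk.inj hf
      exact absurd (by simpa [swapPref, σ] using hσr') hr
    · simpa [σ] using hf
  calc invDist (swapPref a b r) s
      ≤ ({p : A × A | r p.1 p.2 ∧ s p.2 p.1} \ {(a, b)}).ncard :=
        Set.ncard_le_ncard_of_injOn f hmaps hinj (Set.toFinite _)
    _ < invDist r s := Set.ncard_sdiff_singleton_lt_of_mem ⟨hab, hba⟩ (Set.toFinite _)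

end SwapPref

def FlexibleCondition {A : Type*} [Fintype A] (π : List (A → A → Prop)) (s : A → A → Prop) :
    Prop :=
  ∀ r' r : A → A → Prop, IsStrictTotalOrder A r' → IsStrictTotalOrder A r →
    freq π r' > freq π r → invDist r' s ≤ invDist r s

section Profile

variable {A : Type*} (π : List (A → A → Prop))

lemma freq_eq_card (r : A → A → Prop) : freq π r = #{i | π.get i = r} := by
  rw [freq, ← Set.ncard_coe_finset]; simp

lemma votesFor_eq_card (a b : A) : votesFor π a b = #{i | π.get i a b} := by
  rw [votesFor, ← Set.ncard_coe_finset]; simp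

lemma sum_freq_eq_card (S : Finset (A → A → Prop)) :
    ∑ q ∈ S, freq π q = #{i | π.get i ∈ S} := by
  simp only [freq_eq_card]
  exact sum_card_fiberwise_eq_card_filter _ _ _

variable {π}

lemma votesFor_add_votesFor_swap (hπ : ∀ r ∈ π, IsStrictTotalOrder A r) {a b : A}
    (hab : a ≠ b) : votesFor π a b + votesFor π b a = π.length := by
  have hba : ∀ i, π.get i b a ↔ ¬ π.get i a b := fun i => by
    have := hπ _ (π.get_mem i)
    exact ⟨asymm_of _, fun h =>
      (Std.Trichotomous.rel_or_eq_or_rel_swap.resolve_left h).resolve_left hab⟩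
  simp only [votesFor_eq_card, hba, card_filter_add_card_filter_not, card_univ, Fintype.card_fin]

lemma exists_freq_swapPref_lt [DecidableEq A] {a b : A} (hv : votesFor π b a < votesFor π a b) :
    ∃ q ∈ π, q a b ∧ freq π (swapPref a b q) < freq π q := by
  set S := π.toFinset.filter (fun q => q a b)
  have hS : votesFor π a b = ∑ q ∈ S, freq π q := by
    rw [sum_freq_eq_card, votesFor_eq_card]
    congr 1; ext i; simp [S]
  have hσS : ∑ q ∈ S, freq π (swapPref a b q) ≤ votesFor π b a := by
    rw [← sum_image (swapPref_injective a b).injOn, sum_freq_eq_card, votesFor_eq_card]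
    refine card_le_card fun i => ?_
    simp only [S, mem_filter, mem_image, List.mem_toFinset, mem_univ, true_and]
    rintro ⟨q, ⟨-, hq⟩, hi⟩
    rw [← hi]
    simpa [swapPref] using hq
  obtain ⟨q, hq, hlt⟩ := exists_lt_of_sum_lt (hσS.trans_lt (hv.trans_eq hS))
  simp only [S, mem_filter, List.mem_toFinset] at hq
  exact ⟨q, hq.1, hq.2, hlt⟩

lemma votesFor_ne_votesFor_swap (hπ : ∀ r ∈ π, IsStrictTotalOrder A r) (hodd : Odd π.length)
    {a b : A} (hab : a ≠ b) : votesFor π a b ≠ votesFor π b a := by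
  intro h
  have hsum := votesFor_add_votesFor_swap hπ hab
  rw [h] at hsum
  exact Nat.not_even_iff_odd.2 hodd ⟨_, hsum.symm⟩

lemma FlexibleCondition.not_rel_of_votesFor_lt [Fintype A] [DecidableEq A] {s : A → A → Prop}
    [IsStrictOrder A s] (hflex : FlexibleCondition π s) (hπ : ∀ r ∈ π, IsStrictTotalOrder A r)
    {a b : A} (hv : votesFor π b a < votesFor π a b) : ¬ s b a := by
  intro hba
  obtain ⟨q, hqπ, hq, hlt⟩ := exists_freq_swapPref_lt hv
  have := hπ q hqπ
  exact (hflex q (swapPref a b q) this inferInstance hlt).not_gt (invDist_swapPref_lt hq hba)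

end Profile

theorem flexible_odd_unique_general {A : Type*} [Fintype A]
    (π : List (A → A → Prop)) (hπ : ∀ r ∈ π, IsStrictTotalOrder A r)
    (hodd : Odd π.length)
    (r0 r1 : A → A → Prop) (hr0 : IsStrictTotalOrder A r0) (hr1 : IsStrictTotalOrder A r1)
    (hflex0 : ∀ r' r : A → A → Prop, IsStrictTotalOrder A r' → IsStrictTotalOrder A r →
      freq π r' > freq π r → invDist r' r0 ≤ invDist r r0)
    (hflex1 : ∀ r' r : A → A → Prop, IsStrictTotalOrder A r' → IsStrictTotalOrder A r →
      freq π r' > freq π r → invDist r' r1 ≤ invDist r r1) :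
    r0 = r1 := by
  by_contra hne
  obtain ⟨a, b, h0, h1⟩ := exists_rel_and_rel_swap_of_ne hne
  rcases (votesFor_ne_votesFor_swap hπ hodd (ne_of_irrefl h0)).lt_or_gt with hv | hv
  · exact FlexibleCondition.not_rel_of_votesFor_lt hflex0 hπ hv h0
  · exact FlexibleCondition.not_rel_of_votesFor_lt hflex1 hπ hv h1

/-- With an odd number of voters, the preference around which there is Flexible
Consensus is unique. -/
theorem flexible_odd_unique {A : Type*} [Fintype A]
    (hK : 3 ≤ Fintype.card A)
    (π : List (A → A → Prop)) (hπ : ∀ r ∈ π, IsStrictTotalOrder A r)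
    (hodd : Odd π.length)
    (r0 r1 : A → A → Prop) (hr0 : IsStrictTotalOrder A r0) (hr1 : IsStrictTotalOrder A r1)
    (hflex0 : ∀ r' r : A → A → Prop, IsStrictTotalOrder A r' → IsStrictTotalOrder A r →
      freq π r' > freq π r → invDist r' r0 ≤ invDist r r0)
    (hflex1 : ∀ r' r : A → A → Prop, IsStrictTotalOrder A r' → IsStrictTotalOrder A r →
      freq π r' > freq π r → invDist r' r1 ≤ invDist r r1) :
    r0 = r1 :=
  flexible_odd_unique_general π hπ hodd r0 r1 hr0 hr1 hflex0 hflex1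
end

section
/- Let π be a profile with an even number of voters, ≻₀ a preference satisfying Flexible Condition 1 for π, and a, b alternatives with a M_π b but b ≻₀ a. Then the preference w^{ab}(≻₀), obtained from ≻₀ by swapping a and b, also satisfies Flexible Condition 1 for π, and a is ranked above b by w^{ab}(≻₀). -/
open Classical

/-!
Write `σ` for the transposition of `a` and `b`. Since `σ` acts by isometries,
`d(σ ≻, ≻₀) = d(≻, σ ≻₀)`, and if `≻` ranks `a` above `b` while `≻₀` ranks `b` above `a`, then
`d(≻, σ ≻₀) < d(≻, ≻₀)`. Hence Flexible Condition 1 forces `μ(≻) ≤ μ(σ ≻)` for every `≻`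
ranking `a` above `b`. Summing over these rankings gives `#(a over b) ≤ #(b over a)`, which the
weak majority `a M_π b` turns into an equality, so all these inequalities are equalities:
`μ ∘ σ = μ`. Flexible Condition 1 for `≻₀` then transports along `σ` to `σ ≻₀`.
-/

def FlexibleCondition1 {A : Type*} [Fintype A] (π : List (A → A → Prop))
    (r0 : A → A → Prop) : Prop :=
  ∀ r' r : A → A → Prop, IsStrictTotalOrder A r' → IsStrictTotalOrder A r →
    freq π r' > freq π r → invDist r' r0 ≤ invDist r r0

def inversions {A : Type*} (r r0 : A → A → Prop) : Set (A × A) :=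
  {p | r p.1 p.2 ∧ r0 p.2 p.1}

section SwapPref

variable {A : Type*} [DecidableEq A] {a b : A}

theorem swapPref_involutive (a b : A) : Function.Involutive (swapPref a b) := fun r => by
  funext x y
  simp [swapPref]

@[simp]
theorem swapPref_apply_left_right (r : A → A → Prop) : swapPref a b r a b ↔ r b a := by
  simp [swapPref]

@[simp]
theorem swapPref_apply_right_left (r : A → A → Prop) : swapPref a b r b a ↔ r a b := by
  simp [swapPref]

theorem IsStrictTotalOrder.swapPref {r : A → A → Prop} (hr : IsStrictTotalOrder A r) (a b : A) :
    IsStrictTotalOrder A (swapPref a b r) :=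
  (RelEmbedding.preimage (Equiv.swap a b).toEmbedding r).isStrictTotalOrder

theorem invDist_swapPref_left [Fintype A] (a b : A) (r r0 : A → A → Prop) :
    invDist (swapPref a b r) r0 = invDist r (swapPref a b r0) := by
  let σ := Equiv.swap a b
  have hpre : inversions (swapPref a b r) r0 =
      σ.prodCongr σ ⁻¹' inversions r (swapPref a b r0) := by
    ext ⟨x, y⟩
    simp [inversions, swapPref, σ]
  rw [invDist, invDist, ← inversions, ← inversions, hpre,
    Set.ncard_preimage_of_injective_subset_range (σ.prodCongr σ).injective (by simp)]

theorem swapPref_of_inversion {r r0 : A → A → Prop} [IsStrictOrder A r] [IsStrictOrder A r0]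
    (hab : r a b) (hba : r0 b a) {x y : A} (hxy : r x y) (h0xy : r0 x y)
    (h0yx : swapPref a b r0 y x) : swapPref a b r x y := by
  have htr : ∀ {x y z : A}, r x y → r y z → r x z := trans_of r
  have htr0 : ∀ {x y z : A}, r0 x y → r0 y z → r0 x z := trans_of r0
  have has : ∀ {x y : A}, r x y → ¬ r y x := asymm_of r
  have has0 : ∀ {x y : A}, r0 x y → ¬ r0 y x := asymm_of r0
  simp only [swapPref, Equiv.swap_apply_def] at h0yx ⊢
  split_ifs at h0yx ⊢ <;> subst_vars <;> grind

theorem invDist_swapPref_right_lt [Fintype A] {r r0 : A → A → Prop} [IsStrictOrder A r]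
    [IsStrictTotalOrder A r0] (hab : r a b) (hba : r0 b a) :
    invDist r (swapPref a b r0) < invDist r r0 := by
  let σ := Equiv.swap a b
  set D := inversions r r0
  set D' := inversions r (swapPref a b r0)
  -- `σ` sends each inversion created by swapping `a` and `b` in `r0` to one removed by it.
  have hmaps : σ.prodCongr σ '' (D' \ D) ⊆ D \ D' := by
    rintro _ ⟨⟨x, y⟩, ⟨⟨hxy, h0yx⟩, hD⟩, rfl⟩
    have h0xy : r0 x y :=
      (trichotomous_of r0 x y).resolve_right (not_or.2 ⟨ne_of_irrefl hxy, fun h => hD ⟨hxy, h⟩⟩)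
    refine ⟨⟨swapPref_of_inversion hab hba hxy h0xy h0yx, h0yx⟩, fun h => hD ⟨hxy, ?_⟩⟩
    simpa [swapPref, σ] using h.2
  have hab_mem : (a, b) ∈ D \ D' := ⟨⟨hab, hba⟩, fun h => asymm hba (by simpa using h.2)⟩
  have hab_not_mem : (a, b) ∉ σ.prodCongr σ '' (D' \ D) := by
    rintro ⟨⟨x, y⟩, ⟨⟨hxy, -⟩, -⟩, hp⟩
    obtain ⟨rfl, rfl⟩ : x = b ∧ y = a := by simpa [σ, Equiv.swap_apply_eq_iff] using hp
    exact asymm hab hxy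
  rw [invDist, invDist, ← inversions, ← inversions,
    Set.ncard_lt_ncard_iff_ncard_sdiff_lt_ncard_sdiff,
    ← Set.ncard_image_of_injective _ (σ.prodCongr σ).injective]
  exact Set.ncard_lt_ncard ((Set.ssubset_iff_of_subset hmaps).2 ⟨_, hab_mem, hab_not_mem⟩)

end SwapPref

section Profile

variable {A : Type*} (π : List (A → A → Prop))

theorem freq_pos_iff_mem {r : A → A → Prop} : 0 < freq π r ↔ r ∈ π := by
  rw [freq, Set.ncard_pos, List.mem_iff_get]
  rfl

theorem votesFor_eq_sum_freq [Fintype (A → A → Prop)] (a b : A) :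
    votesFor π a b = ∑ r ∈ Finset.univ.filter (fun r : A → A → Prop => r a b), freq π r := by
  simp only [votesFor, freq, Set.ncard_eq_toFinset_card', Set.toFinset_ofPred]
  rw [Finset.card_eq_sum_card_fiberwise (f := π.get)
    (t := Finset.univ.filter (fun r : A → A → Prop => r a b)) (by simp [Set.MapsTo])]
  refine Finset.sum_congr rfl fun r hr => congrArg Finset.card ?_
  ext i
  simp only [Finset.mem_filter, Finset.mem_univ, true_and] at hr ⊢
  exact ⟨And.right, fun h => ⟨h ▸ hr, h⟩⟩

variable [Fintype A] [DecidableEq A] {π} {r0 : A → A → Prop} {a b : A}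

theorem FlexibleCondition1.freq_le_freq_swapPref (hflex : FlexibleCondition1 π r0)
    [IsStrictTotalOrder A r0] (hba : r0 b a) {r : A → A → Prop} [hr : IsStrictTotalOrder A r]
    (hab : r a b) : freq π r ≤ freq π (swapPref a b r) := by
  by_contra! hlt
  have hle := hflex r _ hr (hr.swapPref a b) hlt
  rw [invDist_swapPref_left] at hle
  exact (invDist_swapPref_right_lt hab hba).not_ge hle

theorem FlexibleCondition1.freq_swapPref_of_rel (hπ : ∀ r ∈ π, IsStrictTotalOrder A r)
    (hflex : FlexibleCondition1 π r0) [IsStrictTotalOrder A r0] (hba : r0 b a)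
    (hmaj : votesFor π b a ≤ votesFor π a b) {r : A → A → Prop} (hab : r a b) :
    freq π (swapPref a b r) = freq π r := by
  let R := Finset.univ.filter (fun r : A → A → Prop => r a b)
  have hle : ∀ r ∈ R, freq π r ≤ freq π (swapPref a b r) := fun r hr => by
    rcases (freq π r).eq_zero_or_pos with h | h
    · simp [h]
    · have := hπ r ((freq_pos_iff_mem π).1 h)
      exact hflex.freq_le_freq_swapPref hba (Finset.mem_filter.1 hr).2
  have hsum : ∑ r ∈ R, freq π (swapPref a b r) = votesFor π b a := by
    rw [votesFor_eq_sum_freq]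
    exact Finset.sum_nbij' (swapPref a b) (swapPref a b) (by simp [R]) (by simp [R])
      (fun r _ => swapPref_involutive a b r) (fun r _ => swapPref_involutive a b r)
      (fun _ _ => rfl)
  have hsum_eq : ∑ r ∈ R, freq π r = ∑ r ∈ R, freq π (swapPref a b r) := by
    refine (Finset.sum_le_sum hle).antisymm ?_
    rw [hsum]
    exact hmaj.trans (votesFor_eq_sum_freq π a b).le
  exact ((Finset.sum_eq_sum_iff_of_le hle).1 hsum_eq r (by simpa [R])).symm

theorem FlexibleCondition1.freq_swapPref (hπ : ∀ r ∈ π, IsStrictTotalOrder A r)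
    (hflex : FlexibleCondition1 π r0) [IsStrictTotalOrder A r0] (hba : r0 b a)
    (hmaj : votesFor π b a ≤ votesFor π a b) (r : A → A → Prop) :
    freq π (swapPref a b r) = freq π r := by
  have hinv := swapPref_involutive a b
  have hmem : ∀ r ∈ π, freq π (swapPref a b r) = freq π r := fun r hr => by
    have := hπ r hr
    rcases trichotomous_of r a b with h | rfl | h
    · exact hflex.freq_swapPref_of_rel hπ hba hmaj h
    · exact (irrefl a hba).elim
    · rw [← hflex.freq_swapPref_of_rel hπ hba hmaj (r := swapPref a b r) (by simpa), hinv]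
  by_cases hr : r ∈ π
  · exact hmem r hr
  by_cases hσr : swapPref a b r ∈ π
  · rw [← hmem _ hσr, hinv]
  · rw [← freq_pos_iff_mem, not_lt] at hr hσr
    omega

theorem FlexibleCondition1.swapPref (hπ : ∀ r ∈ π, IsStrictTotalOrder A r)
    (hflex : FlexibleCondition1 π r0) [IsStrictTotalOrder A r0] (hba : r0 b a)
    (hmaj : votesFor π b a ≤ votesFor π a b) : FlexibleCondition1 π (swapPref a b r0) := by
  intro r' r hr' hr hgt
  rw [← hflex.freq_swapPref hπ hba hmaj r', ← hflex.freq_swapPref hπ hba hmaj r] at hgt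
  simpa only [invDist_swapPref_left] using hflex _ _ (hr'.swapPref a b) (hr.swapPref a b) hgt

end Profile

theorem flexible_even_swap_general {A : Type*} [Fintype A] [DecidableEq A]
    (π : List (A → A → Prop)) (hπ : ∀ r ∈ π, IsStrictTotalOrder A r)
    (r0 : A → A → Prop) (hr0 : IsStrictTotalOrder A r0)
    (hflex : ∀ r' r : A → A → Prop, IsStrictTotalOrder A r' → IsStrictTotalOrder A r →
      freq π r' > freq π r → invDist r' r0 ≤ invDist r r0)
    (a b : A)
    (hmaj : votesFor π b a ≤ votesFor π a b) (hba : r0 b a) :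
    (∀ r' r : A → A → Prop, IsStrictTotalOrder A r' → IsStrictTotalOrder A r →
      freq π r' > freq π r →
      invDist r' (swapPref a b r0) ≤ invDist r (swapPref a b r0)) ∧
    swapPref a b r0 a b :=
  ⟨FlexibleCondition1.swapPref hπ hflex hba hmaj, (swapPref_apply_left_right r0).2 hba⟩

/-- With an even number of voters, if Flexible Condition 1 holds for `≻₀`,
`a M_π b` but `b ≻₀ a`, then Flexible Condition 1 also holds for the preference
obtained from `≻₀` by swapping `a` and `b`, which ranks `a` above `b`. -/
theorem flexible_even_swap {A : Type*} [Fintype A] [DecidableEq A]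
    (hK : 3 ≤ Fintype.card A)
    (π : List (A → A → Prop)) (hπ : ∀ r ∈ π, IsStrictTotalOrder A r)
    (heven : Even π.length)
    (r0 : A → A → Prop) (hr0 : IsStrictTotalOrder A r0)
    (hflex : ∀ r' r : A → A → Prop, IsStrictTotalOrder A r' → IsStrictTotalOrder A r →
      freq π r' > freq π r → invDist r' r0 ≤ invDist r r0)
    (a b : A) (hab : a ≠ b)
    (hmaj : votesFor π b a ≤ votesFor π a b) (hba : r0 b a) :
    (∀ r' r : A → A → Prop, IsStrictTotalOrder A r' → IsStrictTotalOrder A r →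
      freq π r' > freq π r →
      invDist r' (swapPref a b r0) ≤ invDist r (swapPref a b r0)) ∧
    swapPref a b r0 a b :=
  flexible_even_swap_general π hπ r0 hr0 hflex a b hmaj hba
end
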